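/- Let B₁, B₂, B₃, B₄ be the Bell states in ℂ²⊗ℂ² and σ the four-qubit reordering isomorphism. Then for all i, j ∈ {1,2,3,4} with i ≠ j and all a, b ∈ {1,2,3,4}, the measurement amplitudes satisfy |⟨B_a ⊗ B_b, σ(B_i ⊗ B_j)⟩| = |⟨B_a ⊗ B_b, σ(B_j ⊗ B_i)⟩|. In other words, the outcome probabilities of the local Bell-basis measurements in the protocol of Theorem 3.2 are independent of the order in which the two Bell states are distributed. -/
import Mathlib


open scoped InnerProductSpace

noncomputable section

/-- The standard basis kets `|0⟩, |1⟩` of a qubit `ℂ² = EuclideanSpace ℂ (Fin 2)`. -/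
def ket2 (i : Fin 2) : EuclideanSpace ℂ (Fin 2) := EuclideanSpace.single i 1

/-- Tensor product of vectors of Euclidean spaces, realized concretely:
`(x ⊗ y) (i, j) = x i * y j`.  The induced inner product on
`EuclideanSpace ℂ (ι × κ)` is exactly the tensor-product inner product. -/
def tp {ι κ : Type*} [Fintype ι] [Fintype κ]
    (x : EuclideanSpace ℂ ι) (y : EuclideanSpace ℂ κ) : EuclideanSpace ℂ (ι × κ) :=
  (WithLp.equiv 2 _).symm fun p => x p.1 * y p.2

/-- The four Bell states `B₁, B₂, B₃, B₄` (indexed here by `0,1,2,3`). -/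
def Bell : Fin 4 → EuclideanSpace ℂ (Fin 2 × Fin 2) :=
  ![((Real.sqrt 2 : ℂ))⁻¹ • (tp (ket2 0) (ket2 0) + tp (ket2 1) (ket2 1)),
    ((Real.sqrt 2 : ℂ))⁻¹ • (tp (ket2 0) (ket2 0) - tp (ket2 1) (ket2 1)),
    ((Real.sqrt 2 : ℂ))⁻¹ • (tp (ket2 0) (ket2 1) + tp (ket2 1) (ket2 0)),
    ((Real.sqrt 2 : ℂ))⁻¹ • (tp (ket2 0) (ket2 1) - tp (ket2 1) (ket2 0))]

lemma tp_apply {ι κ : Type*} [Fintype ι] [Fintype κ]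
    (x : EuclideanSpace ℂ ι) (y : EuclideanSpace ℂ κ) (p : ι × κ) :
    tp x y p = x p.1 * y p.2 := rfl

lemma tp_expand (X Y : EuclideanSpace ℂ (Fin 2 × Fin 2)) :
    tp X Y = ∑ i : Fin 2, ∑ j : Fin 2, ∑ k : Fin 2, ∑ l : Fin 2,
      (X (i,j) * Y (k,l)) • tp (tp (ket2 i) (ket2 j)) (tp (ket2 k) (ket2 l)) := by
  ext ⟨⟨p,q⟩,⟨r,s⟩⟩
  simp [tp, ket2, EuclideanSpace.single_apply, Fin.sum_univ_two, Finset.sum_apply,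
    PiLp.smul_apply, PiLp.add_apply]
  fin_cases p <;> fin_cases q <;> fin_cases r <;> fin_cases s <;> simp

lemma sigma_apply
    (σ : EuclideanSpace ℂ ((Fin 2 × Fin 2) × (Fin 2 × Fin 2)) →ₗ[ℂ]
         EuclideanSpace ℂ ((Fin 2 × Fin 2) × (Fin 2 × Fin 2)))
    (hσ : ∀ a₁ b₁ a₂ b₂ : EuclideanSpace ℂ (Fin 2),
      σ (tp (tp a₁ b₁) (tp a₂ b₂)) = tp (tp a₁ a₂) (tp b₁ b₂))
    (X Y : EuclideanSpace ℂ (Fin 2 × Fin 2)) (p q r s : Fin 2) :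
    σ (tp X Y) ((p,q),(r,s)) = X (p,r) * Y (q,s) := by
  rw [tp_expand X Y]
  simp only [map_sum, map_smul, hσ]
  simp [tp_apply, ket2, EuclideanSpace.single_apply, Fin.sum_univ_two, Finset.sum_apply,
    PiLp.smul_apply]
  fin_cases p <;> fin_cases q <;> fin_cases r <;> fin_cases s <;> simp

lemma bell_symm (k : Fin 4) : ∃ ε : ℂ, (ε = 1 ∨ ε = -1) ∧
    ∀ p q : Fin 2, Bell k (q, p) = ε * Bell k (p, q) := by
  fin_cases k
  · exact ⟨1, Or.inl rfl, fun p q => by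
      fin_cases p <;> fin_cases q <;> simp [Bell, tp, ket2, EuclideanSpace.single_apply]⟩
  · exact ⟨1, Or.inl rfl, fun p q => by
      fin_cases p <;> fin_cases q <;> simp [Bell, tp, ket2, EuclideanSpace.single_apply]⟩
  · exact ⟨1, Or.inl rfl, fun p q => by
      fin_cases p <;> fin_cases q <;> simp [Bell, tp, ket2, EuclideanSpace.single_apply]⟩
  · exact ⟨-1, Or.inr rfl, fun p q => by
      fin_cases p <;> fin_cases q <;> simp [Bell, tp, ket2, EuclideanSpace.single_apply]⟩

/-- For the reordering isomorphism `σ` (any linear map acting as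
`(a₁⊗b₁)⊗(a₂⊗b₂) ↦ (a₁⊗a₂)⊗(b₁⊗b₂)` on elementary tensors), the amplitudes of the
local Bell-basis measurement are independent of the order of the two distributed
Bell states: `|⟨B_a ⊗ B_b, σ(B_i ⊗ B_j)⟩| = |⟨B_a ⊗ B_b, σ(B_j ⊗ B_i)⟩|`. -/
theorem bell_measurement_order_independent
    (σ : EuclideanSpace ℂ ((Fin 2 × Fin 2) × (Fin 2 × Fin 2)) →ₗ[ℂ]
         EuclideanSpace ℂ ((Fin 2 × Fin 2) × (Fin 2 × Fin 2)))
    (hσ : ∀ a₁ b₁ a₂ b₂ : EuclideanSpace ℂ (Fin 2),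
      σ (tp (tp a₁ b₁) (tp a₂ b₂)) = tp (tp a₁ a₂) (tp b₁ b₂)) :
    ∀ i j a b : Fin 4, i ≠ j →
      ‖⟪tp (Bell a) (Bell b), σ (tp (Bell i) (Bell j))⟫_ℂ‖ =
      ‖⟪tp (Bell a) (Bell b), σ (tp (Bell j) (Bell i))⟫_ℂ‖ := by
  intro i j a b _
  obtain ⟨εa, ha, hsa⟩ := bell_symm a
  obtain ⟨εb, hb, hsb⟩ := bell_symm b
  have hεa : (starRingEnd ℂ) εa = εa := by rcases ha with h | h <;> simp [h]
  have hεb : (starRingEnd ℂ) εb = εb := by rcases hb with h | h <;> simp [h]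
  have ha2 : εa * εa = 1 := by rcases ha with h | h <;> simp [h]
  have hb2 : εb * εb = 1 := by rcases hb with h | h <;> simp [h]
  have key : ⟪tp (Bell a) (Bell b), σ (tp (Bell j) (Bell i))⟫_ℂ
      = (εa * εb) * ⟪tp (Bell a) (Bell b), σ (tp (Bell i) (Bell j))⟫_ℂ := by
    rw [PiLp.inner_apply, PiLp.inner_apply, Finset.mul_sum]
    refine Fintype.sum_equiv
      (Equiv.prodCongr (Equiv.prodComm (Fin 2) (Fin 2)) (Equiv.prodComm (Fin 2) (Fin 2)))
      _ _ ?_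
    rintro ⟨⟨p, q⟩, ⟨r, s⟩⟩
    simp only [Equiv.prodCongr_apply, Equiv.prodComm_apply, Prod.map, Prod.swap]
    rw [sigma_apply σ hσ, sigma_apply σ hσ]
    simp only [RCLike.inner_apply, tp_apply]
    rw [hsa p q, hsb r s]
    simp only [map_mul, hεa, hεb]
    ring_nf
    rw [pow_two εa, pow_two εb, ha2, hb2]
    ring
  rw [key, norm_mul, norm_mul]
  rcases ha with h | h <;> rcases hb with h' | h' <;> simp [h, h']

end
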